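/- The map ψ₃: ℂ⁵ → ℂ⁸ given by (a,b,c,u,v) ↦ (m₁,m₂,m₃,m₁₂,m₁₃,m₂₃,m₁₂₃) (using the explicit moment polynomials of the binary HMM) is injective on the open set where b ≠ 0, ab−a+c ≠ 0, and m₃−m₂ ≠ 0, m₂−m₁ ≠ 0; explicitly, on this set the parameters can be recovered by b = (m₃−m₂)/(m₂−m₁), u = (m₁m₃−m₂²+m₂₃−m₁₂)/(2(m₃−m₂)), a = m₁−u, c = a−ba+m₂−m₁, v = a² − (m₁m₂−m₁₂)/b. -/
import Mathlib


/-- The moment parametrization `ψ₃ : ℂ⁵ → ℂ⁷ ⊆ ℂ⁸` of the binary HMM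
(the coordinate `m_∅ = 1` is omitted). -/
noncomputable def psi3 : ℂ × ℂ × ℂ × ℂ × ℂ → ℂ × ℂ × ℂ × ℂ × ℂ × ℂ × ℂ
  | (a, b, c, u, v) =>
    (a + u,
     a * b + c + u,
     a * b ^ 2 + b * c + c + u,
     a * b * u + a * c + a * u + c * u + u ^ 2 + b * v,
     a * b ^ 2 * u + a * b * c + b * c * u + b ^ 2 * v + a * c + a * u + c * u + u ^ 2,
     a * b ^ 2 * u + a * b * c + a * b * u + b * c * u + c ^ 2 + 2 * c * u + u ^ 2 + b * v,
     a * b ^ 2 * u ^ 2 + 2 * a * b * c * u + a * b * u ^ 2 + b * c * u ^ 2 +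
       b ^ 2 * u * v + a * c ^ 2 + 2 * a * c * u + c ^ 2 * u + a * u ^ 2 +
       2 * c * u ^ 2 + u ^ 3 + a * b * v + b * c * v + 2 * b * u * v)

/-- The open set where `b ≠ 0`, `ab − a + c ≠ 0`, `m₃ − m₂ ≠ 0`, `m₂ − m₁ ≠ 0`. -/
def goodSet : Set (ℂ × ℂ × ℂ × ℂ × ℂ) :=
  {p | p.2.1 ≠ 0 ∧ p.1 * p.2.1 - p.1 + p.2.2.1 ≠ 0 ∧
    (psi3 p).2.2.1 - (psi3 p).2.1 ≠ 0 ∧ (psi3 p).2.1 - (psi3 p).1 ≠ 0}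

lemma psi3_recov (a b c u v : ℂ) (h : (a, b, c, u, v) ∈ goodSet) :
      let m := psi3 (a, b, c, u, v)
      let m₁ := m.1; let m₂ := m.2.1; let m₃ := m.2.2.1
      let m₁₂ := m.2.2.2.1; let m₂₃ := m.2.2.2.2.2.1
      b = (m₃ - m₂) / (m₂ - m₁) ∧
      u = (m₁ * m₃ - m₂ ^ 2 + m₂₃ - m₁₂) / (2 * (m₃ - m₂)) ∧
      a = m₁ - u ∧
      c = a - b * a + m₂ - m₁ ∧
      v = a ^ 2 - (m₁ * m₂ - m₁₂) / b := by
  obtain ⟨hb, hk, h32, h21⟩ := h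
  simp only [psi3] at h32 h21 ⊢
  refine ⟨?_, ?_, ?_, ?_, ?_⟩
  · rw [eq_div_iff h21]; ring
  · have h2 : (2:ℂ) * (a * b ^ 2 + b * c + c + u - (a * b + c + u)) ≠ 0 := by
      intro hz; exact h32 (by linear_combination 2⁻¹ * hz)
    rw [eq_div_iff h2]; ring
  · ring
  · ring
  · simp only at hb
    rw [eq_sub_iff_add_eq]; field_simp; ring

/-- `ψ₃` is injective on the set where `b ≠ 0`, `ab−a+c ≠ 0`, `m₃−m₂ ≠ 0`, `m₂−m₁ ≠ 0`;
explicitly, on this set the parameters are recovered rationally from the moments. -/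
theorem psi3_injective_and_recovery :
    Set.InjOn psi3 goodSet ∧
    ∀ a b c u v : ℂ, (a, b, c, u, v) ∈ goodSet →
      let m := psi3 (a, b, c, u, v)
      let m₁ := m.1; let m₂ := m.2.1; let m₃ := m.2.2.1
      let m₁₂ := m.2.2.2.1; let m₁₃ := m.2.2.2.2.1; let m₂₃ := m.2.2.2.2.2.1
      b = (m₃ - m₂) / (m₂ - m₁) ∧
      u = (m₁ * m₃ - m₂ ^ 2 + m₂₃ - m₁₂) / (2 * (m₃ - m₂)) ∧
      a = m₁ - u ∧
      c = a - b * a + m₂ - m₁ ∧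
      v = a ^ 2 - (m₁ * m₂ - m₁₂) / b := by
  constructor
  · rintro ⟨a, b, c, u, v⟩ hp ⟨a', b', c', u', v'⟩ hq heq
    obtain ⟨hb, hu, ha, hc, hv⟩ := psi3_recov a b c u v hp
    obtain ⟨hb', hu', ha', hc', hv'⟩ := psi3_recov a' b' c' u' v' hq
    rw [heq] at hb hu ha hc hv
    have eb : b = b' := hb.trans hb'.symm
    have eu : u = u' := hu.trans hu'.symm
    have ea : a = a' := by rw [eu] at ha; exact ha.trans ha'.symm
    have ec : c = c' := by rw [ea, eb] at hc; exact hc.trans hc'.symm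
    have ev : v = v' := by rw [ea, eb] at hv; exact hv.trans hv'.symm
    simp [ea, eb, ec, eu, ev]
  · exact fun a b c u v h => psi3_recov a b c u v h
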